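/- arXiv:0905.1375 — 3 statements merged into one kernel-verified Lean document; each statement's English description precedes it below -/
import Mathlib

section
/- For all k ≥ 1 and all w ∈ [0,1]: h_2(w) - ∑_{z=0}^k C(k,z) w^z (1-w)^{k-z} h_2(z/k) ≤ 1/(k ln 2). -/
open Finset

/-- Binary entropy in bits. -/
noncomputable def h2 (p : ℝ) : ℝ := -(p * Real.logb 2 p) - (1 - p) * Real.logb 2 (1 - p)

/-- Natural-log binary entropy. -/
noncomputable def phiNat (p : ℝ) : ℝ := -(p * Real.log p) - (1 - p) * Real.log (1 - p)

lemma h2_eq_phi (p : ℝ) : h2 p = phiNat p / Real.log 2 := by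
  unfold h2 phiNat Real.logb
  ring

lemma mul_log_le_aux {t p : ℝ} (ht : 0 ≤ t) (hp : 0 < p) :
    t * Real.log t ≤ t * Real.log p + t * (t - p) / p := by
  rcases ht.eq_or_lt with h | h
  · simp [← h]
  · have h1 : Real.log t - Real.log p ≤ t / p - 1 := by
      have h2 := Real.log_le_sub_one_of_pos (show (0:ℝ) < t / p by positivity)
      rwa [Real.log_div h.ne' hp.ne'] at h2
    have h2 : Real.log t ≤ Real.log p + (t - p) / p := by
      have h3 : t / p - 1 = (t - p) / p := by field_simp
      linarith [h3 ▸ h1]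
    calc t * Real.log t ≤ t * (Real.log p + (t - p) / p) :=
          mul_le_mul_of_nonneg_left h2 h.le
      _ = t * Real.log p + t * (t - p) / p := by ring

lemma phi_pointwise {t w : ℝ} (ht0 : 0 ≤ t) (ht1 : t ≤ 1) (hw0 : 0 < w) (hw1 : w < 1) :
    -(t * Real.log w) - (1 - t) * Real.log (1 - w) - (t - w) ^ 2 / (w * (1 - w))
      ≤ phiNat t := by
  have A := mul_log_le_aux ht0 hw0
  have B := mul_log_le_aux (by linarith : (0:ℝ) ≤ 1 - t) (by linarith : (0:ℝ) < 1 - w)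
  have key : t * (t - w) / w + (1 - t) * ((1 - t) - (1 - w)) / (1 - w)
      = (t - w) ^ 2 / (w * (1 - w)) := by
    have hwne : w ≠ 0 := ne_of_gt hw0
    have h1w : (1:ℝ) - w ≠ 0 := by intro h; nlinarith [sub_eq_zero.mp h]
    field_simp
    ring
  unfold phiNat
  nlinarith [A, B, key]

theorem bernstein_entropy_gap_bound (k : ℕ) (hk : 1 ≤ k) (w : ℝ)
    (hw : w ∈ Set.Icc (0 : ℝ) 1) :
    h2 w - ∑ z ∈ Finset.range (k + 1),
        (k.choose z : ℝ) * w ^ z * (1 - w) ^ (k - z) * h2 ((z : ℝ) / k)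
      ≤ 1 / (k * Real.log 2) := by
  obtain ⟨hw0, hw1⟩ := hw
  have hk0 : (0:ℝ) < k := by exact_mod_cast hk
  have hlog2 : (0:ℝ) < Real.log 2 := Real.log_pos (by norm_num)
  -- boundary cases
  rcases hw0.eq_or_lt with h0 | hw0
  · have hs : ∑ z ∈ Finset.range (k + 1),
        (k.choose z : ℝ) * w ^ z * (1 - w) ^ (k - z) * h2 ((z : ℝ) / k) = 0 := by
      apply Finset.sum_eq_zero
      intro z _
      rcases z with _ | z
      · simp [← h0, h2]
      · simp [← h0, zero_pow]
    rw [hs, ← h0]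
    simp only [h2]
    rw [Real.logb_zero]
    simp
    positivity
  rcases hw1.eq_or_lt with h1 | hw1
  · have hs : ∑ z ∈ Finset.range (k + 1),
        (k.choose z : ℝ) * w ^ z * (1 - w) ^ (k - z) * h2 ((z : ℝ) / k) = 0 := by
      apply Finset.sum_eq_zero
      intro z hz
      rcases eq_or_ne z k with hzk | hzk
      · subst hzk
        have : ((z : ℝ) / z) = 1 := by
          field_simp
        rw [this]
        simp [h2]
      · have hzlt : z < k := lt_of_le_of_ne (Nat.lt_succ_iff.mp (Finset.mem_range.mp hz)) hzk
        have : (1 - w) ^ (k - z) = 0 := by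
          rw [h1]
          simp [Nat.sub_ne_zero_of_lt hzlt]
        rw [this]
        ring
    rw [hs, h1]
    simp only [h2]
    rw [Real.logb_one]
    simp [Real.logb_zero]
    positivity
  -- main case 0 < w < 1
  set b : ℕ → ℝ := fun z => (k.choose z : ℝ) * w ^ z * (1 - w) ^ (k - z) with hb_def
  have hbeval : ∀ z, Polynomial.eval w (bernsteinPolynomial ℝ k z) = b z := by
    intro z
    simp [bernsteinPolynomial, hb_def]
  have hbnn : ∀ z, 0 ≤ b z := by
    intro z
    have : (0:ℝ) ≤ 1 - w := by linarith
    positivity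
  have hkne : (k:ℝ) ≠ 0 := ne_of_gt hk0
  have hwne : w ≠ 0 := ne_of_gt hw0
  have h1wne : (1 - w) ≠ 0 := by intro h; linarith [sub_eq_zero.mp h]
  -- Sum identities
  have S0 : ∑ z ∈ Finset.range (k + 1), b z = 1 := by
    have h := bernsteinPolynomial.sum ℝ k
    have h2 := congrArg (Polynomial.eval w) h
    rw [Polynomial.eval_finset_sum] at h2
    simpa [hbeval] using h2
  have S1 : ∑ z ∈ Finset.range (k + 1), (z : ℝ) * b z = k * w := by
    have h := bernsteinPolynomial.sum_smul ℝ k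
    have h2 := congrArg (Polynomial.eval w) h
    rw [Polynomial.eval_finset_sum] at h2
    simpa [hbeval, nsmul_eq_mul] using h2
  have S2 : ∑ z ∈ Finset.range (k + 1), ((k : ℝ) * w - z) ^ 2 * b z = k * w * (1 - w) := by
    have h := bernsteinPolynomial.variance ℝ k
    have h2 := congrArg (Polynomial.eval w) h
    rw [Polynomial.eval_finset_sum] at h2
    simpa [hbeval, nsmul_eq_mul] using h2
  -- lower bound for the Bernstein average of phiNat
  have key : ∑ z ∈ Finset.range (k + 1), b z * phiNat ((z : ℝ) / k)
      ≥ phiNat w - 1 / k := by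
    have step1 : ∑ z ∈ Finset.range (k + 1),
        b z * (-((z:ℝ)/k * Real.log w) - (1 - (z:ℝ)/k) * Real.log (1 - w)
          - ((z:ℝ)/k - w) ^ 2 / (w * (1 - w)))
        ≤ ∑ z ∈ Finset.range (k + 1), b z * phiNat ((z : ℝ) / k) := by
      apply Finset.sum_le_sum
      intro z hz
      apply mul_le_mul_of_nonneg_left _ (hbnn z)
      apply phi_pointwise _ _ hw0 hw1
      · positivity
      · rw [div_le_one hk0]
        exact_mod_cast Nat.lt_succ_iff.mp (Finset.mem_range.mp hz)
    have step2 : ∑ z ∈ Finset.range (k + 1),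
        b z * (-((z:ℝ)/k * Real.log w) - (1 - (z:ℝ)/k) * Real.log (1 - w)
          - ((z:ℝ)/k - w) ^ 2 / (w * (1 - w)))
        = phiNat w - 1 / k := by
      have expand : ∀ z ∈ Finset.range (k + 1),
          b z * (-((z:ℝ)/k * Real.log w) - (1 - (z:ℝ)/k) * Real.log (1 - w)
            - ((z:ℝ)/k - w) ^ 2 / (w * (1 - w)))
          = ((Real.log (1 - w) - Real.log w) / k) * ((z:ℝ) * b z)
            + (-Real.log (1 - w)) * b z
            + (-(1 / (k^2 * (w * (1 - w))))) * (((k:ℝ) * w - z) ^ 2 * b z) := by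
        intro z _
        field_simp
        ring
      rw [Finset.sum_congr rfl expand]
      rw [Finset.sum_add_distrib, Finset.sum_add_distrib, ← Finset.mul_sum,
        ← Finset.mul_sum, ← Finset.mul_sum, S0, S1, S2]
      unfold phiNat
      field_simp
      ring
    linarith
  -- convert to bits
  have final : phiNat w - ∑ z ∈ Finset.range (k + 1), b z * phiNat ((z : ℝ) / k) ≤ 1 / k := by
    linarith
  have goal_eq : h2 w - ∑ z ∈ Finset.range (k + 1),
      (k.choose z : ℝ) * w ^ z * (1 - w) ^ (k - z) * h2 ((z : ℝ) / k)
      = (phiNat w - ∑ z ∈ Finset.range (k + 1), b z * phiNat ((z : ℝ) / k)) / Real.log 2 := by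
    rw [sub_div, Finset.sum_div]
    congr 1
    · rw [h2_eq_phi]
    · apply Finset.sum_congr rfl
      intro z _
      rw [h2_eq_phi, hb_def]
      ring
  rw [goal_eq]
  rw [show (1:ℝ) / (k * Real.log 2) = (1 / k) / Real.log 2 by field_simp]
  gcongr
end

section
/- Let μ be the arcsine measure with density 1/(π√(w(1-w))) on (0,1). For any p = (p_0,...,p_k) ∈ [0,1]^{k+1} with p_0 = 0 and p_k = 1: ∫_0^1 ∑_{z=0}^k α_z(w)(p_z - ∑_{z'} α_{z'}(w) p_{z'})² · (1/(π√(w(1-w)))) dw ≥ 1/(k π²), where α_z(w) = C(k,z) w^z (1-w)^{k-z}. -/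
open Finset

/-- Binomial pmf: α_z(w) = C(k,z) w^z (1-w)^{k-z}. -/
noncomputable def alph (k z : ℕ) (w : ℝ) : ℝ :=
  (k.choose z : ℝ) * w ^ z * (1 - w) ^ (k - z)

/-!
Write `g = ∑ α_z p_z` (the polynomial `bernsteinMean k p`) and `V = ∑ α_z (p_z - g)²`
(`bernsteinVariance k p`). The identity `w(1-w) α_z' = (z - kw) α_z` gives
`w(1-w) g' = ∑ α_z (p_z - g)(z - kw)`, and Cauchy–Schwarz against the binomial variance
`∑ α_z (z - kw)² = kw(1-w)` yields `w(1-w) g'² ≤ k V`. Rather than applying Cauchy–Schwarz to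
the integral, integrate the tangent-line bound `a t² ≥ 2t - 1/a` at `a = π√(w(1-w))`,
`t = g'(w)`: as `∫ g' = g 1 - g 0 = 1` and the arcsine density `1/a` has total mass `1`, this
gives `k π² ∫ V/a ≥ 2 - 1`.
-/

open Polynomial Real MeasureTheory

theorem Polynomial.mul_derivative_pow {R : Type*} [CommRing R] (q : R[X]) (n : ℕ) :
    q * derivative (q ^ n) = n * q ^ n * derivative q := by
  rcases n with _ | n
  · simp
  · rw [derivative_pow, C_eq_natCast, pow_succ]; push_cast; ring

theorem bernsteinPolynomial.X_mul_one_sub_X_mul_derivative {R : Type*} [CommRing R] (n ν : ℕ) :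
    X * (1 - X) * derivative (bernsteinPolynomial R n ν) =
      ((ν : R[X]) - (n : R[X]) * X) * bernsteinPolynomial R n ν := by
  obtain h | h := lt_or_ge n ν
  · simp [bernsteinPolynomial.eq_zero_of_lt R h]
  obtain ⟨m, rfl⟩ := Nat.exists_eq_add_of_le h
  have hX := mul_derivative_pow (X : R[X]) ν
  have hY := mul_derivative_pow (1 - X : R[X]) m
  simp only [derivative_X, derivative_sub, derivative_one] at hX hY
  simp only [bernsteinPolynomial, Nat.add_sub_cancel_left, derivative_mul, derivative_natCast,
    zero_mul, zero_add]
  push_cast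
  linear_combination (↑((ν + m).choose ν) * (1 - X) * (1 - X) ^ m) * hX +
    (↑((ν + m).choose ν) * X * X ^ ν) * hY

section binomialWeights

variable (k : ℕ) (w : ℝ)

theorem alph_eq_eval (z : ℕ) : alph k z w = (bernsteinPolynomial ℝ k z).eval w := by
  simp [alph, bernsteinPolynomial]

theorem alph_nonneg (z : ℕ) (hw : w ∈ Set.Icc 0 1) : 0 ≤ alph k z w := by
  obtain ⟨hw0, hw1⟩ := hw
  have : 0 ≤ 1 - w := sub_nonneg.2 hw1
  unfold alph
  positivity

theorem sum_alph : ∑ z ∈ range (k + 1), alph k z w = 1 := by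
  simpa [alph_eq_eval, eval_finsetSum] using congrArg (eval w) (bernsteinPolynomial.sum ℝ k)

theorem sum_sub_mul_alph : ∑ z ∈ range (k + 1), ((z : ℝ) - k * w) * alph k z w = 0 := by
  have := congrArg (eval w) (bernsteinPolynomial.sum_smul ℝ k)
  simp only [nsmul_eq_mul, eval_finsetSum, eval_mul, eval_natCast, eval_X, ← alph_eq_eval] at this
  simp only [sub_mul, sum_sub_distrib, this, ← mul_sum, sum_alph, mul_one, sub_self]

theorem sum_sub_sq_mul_alph :
    ∑ z ∈ range (k + 1), ((z : ℝ) - k * w) ^ 2 * alph k z w = k * w * (1 - w) := by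
  have := congrArg (eval w) (bernsteinPolynomial.variance ℝ k)
  simp only [eval_finsetSum, eval_mul, eval_pow, eval_sub, eval_X, eval_natCast,
    eval_one, nsmul_eq_mul, ← alph_eq_eval] at this
  rw [← this]
  exact sum_congr rfl fun z _ => by ring

end binomialWeights

noncomputable def bernsteinMean (k : ℕ) (p : ℕ → ℝ) : ℝ[X] :=
  ∑ z ∈ range (k + 1), C (p z) * bernsteinPolynomial ℝ k z

section bernsteinMean

variable (k : ℕ) (p : ℕ → ℝ)

theorem eval_zero_bernsteinMean : (bernsteinMean k p).eval 0 = p 0 := by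
  simp [bernsteinMean, eval_finsetSum, bernsteinPolynomial.eval_at_0]

theorem eval_one_bernsteinMean : (bernsteinMean k p).eval 1 = p k := by
  simp [bernsteinMean, eval_finsetSum, bernsteinPolynomial.eval_at_1]

theorem mul_one_sub_mul_eval_derivative_bernsteinMean (w : ℝ) :
    w * (1 - w) * (derivative (bernsteinMean k p)).eval w =
      ∑ z ∈ range (k + 1), ((z : ℝ) - k * w) * alph k z w * p z := by
  have h : X * (1 - X) * derivative (bernsteinMean k p) = ∑ z ∈ range (k + 1),
      C (p z) * (((z : ℝ[X]) - (k : ℝ[X]) * X) * bernsteinPolynomial ℝ k z) := by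
    simp only [bernsteinMean, derivative_sum, derivative_C_mul, mul_sum]
    refine sum_congr rfl fun z _ => ?_
    rw [← bernsteinPolynomial.X_mul_one_sub_X_mul_derivative]
    ring
  have := congrArg (eval w) h
  simp only [eval_mul, eval_sub, eval_X, eval_one, eval_finsetSum, eval_C, eval_natCast,
    ← alph_eq_eval] at this
  rw [this]
  exact sum_congr rfl fun z _ => by ring

end bernsteinMean

noncomputable def bernsteinVariance (k : ℕ) (p : ℕ → ℝ) (w : ℝ) : ℝ :=
  ∑ z ∈ range (k + 1), alph k z w * (p z - ∑ z' ∈ range (k + 1), alph k z' w * p z') ^ 2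

theorem mul_one_sub_mul_sq_eval_derivative_bernsteinMean_le (k : ℕ) (p : ℕ → ℝ) {w : ℝ}
    (hw : w ∈ Set.Ioo 0 1) :
    w * (1 - w) * (derivative (bernsteinMean k p)).eval w ^ 2 ≤ k * bernsteinVariance k p w := by
  have hw' := Set.Ioo_subset_Icc_self hw
  set m := ∑ z' ∈ range (k + 1), alph k z' w * p z'
  have hD : w * (1 - w) * (derivative (bernsteinMean k p)).eval w =
      ∑ z ∈ range (k + 1), alph k z w * (p z - m) * ((z : ℝ) - k * w) := by
    have h := sum_sub_mul_alph k w
    rw [mul_one_sub_mul_eval_derivative_bernsteinMean, ← sub_zero (∑ z ∈ _, _),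
      ← mul_zero m, ← h, mul_sum, ← sum_sub_distrib]
    exact sum_congr rfl fun z _ => by ring
  have hCS := sum_sq_le_sum_mul_sum_of_sq_le_mul (range (k + 1))
    (r := fun z => alph k z w * (p z - m) * ((z : ℝ) - k * w))
    (fun z _ => mul_nonneg (alph_nonneg k w z hw') (sq_nonneg (p z - m)))
    (fun z _ => mul_nonneg (sq_nonneg ((z : ℝ) - k * w)) (alph_nonneg k w z hw'))
    (fun z _ => le_of_eq (by ring))
  rw [← hD, sum_sub_sq_mul_alph] at hCS
  change _ ≤ bernsteinVariance k p w * _ at hCS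
  refine le_of_mul_le_mul_left ?_ (mul_pos hw.1 (sub_pos.2 hw.2))
  linear_combination hCS

noncomputable def arcsineDensity (w : ℝ) : ℝ := 1 / (π * √(w * (1 - w)))

theorem hasDerivAt_arcsin_two_mul_sub_one_div_pi {w : ℝ} (hw : w ∈ Set.Ioo 0 1) :
    HasDerivAt (fun x => arcsin (2 * x - 1) / π) (arcsineDensity w) w := by
  have hlin : HasDerivAt (fun x : ℝ => 2 * x - 1) 2 w := by
    simpa using ((hasDerivAt_id w).const_mul 2).sub_const 1
  have h := ((hasDerivAt_arcsin (by linarith [hw.1]) (by linarith [hw.2])).comp w hlin).div_const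
    π
  refine h.congr_deriv ?_
  have hs : √(1 - (2 * w - 1) ^ 2) = 2 * √(w * (1 - w)) := by
    rw [show 1 - (2 * w - 1) ^ 2 = 2 ^ 2 * (w * (1 - w)) by ring, sqrt_mul (by norm_num),
      sqrt_sq (by norm_num)]
  rw [hs]; unfold arcsineDensity
  field_simp

theorem arcsineDensity_nonneg (w : ℝ) : 0 ≤ arcsineDensity w := by
  unfold arcsineDensity
  have := pi_pos
  positivity

theorem continuous_arcsin_two_mul_sub_one_div_pi :
    Continuous fun x => arcsin (2 * x - 1) / π := by
  fun_prop

theorem intervalIntegrable_arcsineDensity : IntervalIntegrable arcsineDensity volume 0 1 :=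
  (intervalIntegrable_iff_integrableOn_Ioc_of_le zero_le_one).2 <|
    intervalIntegral.integrableOn_deriv_of_nonneg
      continuous_arcsin_two_mul_sub_one_div_pi.continuousOn
      (fun _ hw => hasDerivAt_arcsin_two_mul_sub_one_div_pi hw) fun w _ => arcsineDensity_nonneg w

theorem integral_arcsineDensity : ∫ w in (0 : ℝ)..1, arcsineDensity w = 1 := by
  rw [intervalIntegral.integral_eq_sub_of_hasDerivAt_of_le zero_le_one
    continuous_arcsin_two_mul_sub_one_div_pi.continuousOn
    (fun _ hw => hasDerivAt_arcsin_two_mul_sub_one_div_pi hw) intervalIntegrable_arcsineDensity]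
  norm_num
  field_simp
  ring

theorem two_mul_sub_arcsineDensity_le {w : ℝ} (hw : w ∈ Set.Ioo 0 1) (t : ℝ) :
    2 * t - arcsineDensity w ≤ π ^ 2 * (w * (1 - w)) * t ^ 2 * arcsineDensity w := by
  have hs : π ^ 2 * (w * (1 - w)) = (π * √(w * (1 - w))) ^ 2 := by
    rw [mul_pow, sq_sqrt (mul_nonneg hw.1.le (sub_nonneg.2 hw.2.le))]
  have ha : 0 < π * √(w * (1 - w)) :=
    mul_pos pi_pos (sqrt_pos.2 (mul_pos hw.1 (sub_pos.2 hw.2)))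
  rw [hs, arcsineDensity]
  generalize π * √(w * (1 - w)) = a at ha ⊢
  field_simp
  nlinarith [sq_nonneg (a * t - 1)]

theorem arcsine_cauchy_schwarz_bound_general (k : ℕ) (hk : 1 ≤ k) (p : ℕ → ℝ)
    (h0 : p 0 = 0) (hk1 : p k = 1) :
    (∫ w in (0:ℝ)..1,
        (∑ z ∈ Finset.range (k + 1),
            alph k z w * (p z - ∑ z' ∈ Finset.range (k + 1), alph k z' w * p z') ^ 2)
          * (1 / (Real.pi * Real.sqrt (w * (1 - w)))))
      ≥ 1 / (k * Real.pi ^ 2) := by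
  set G := bernsteinMean k p
  have hk0 : (0 : ℝ) < k := by exact_mod_cast hk
  have hG' : IntervalIntegrable (fun w => (derivative G).eval w) volume 0 1 :=
    (derivative G).continuous.intervalIntegrable 0 1
  have hFTC : ∫ w in (0 : ℝ)..1, (derivative G).eval w = 1 := by
    rw [intervalIntegral.integral_eq_sub_of_hasDerivAt (fun w _ => G.hasDerivAt w) hG',
      eval_one_bernsteinMean, eval_zero_bernsteinMean, h0, hk1, sub_zero]
  have hV : Continuous (bernsteinVariance k p) := by
    unfold bernsteinVariance alph; fun_prop
  have hpt : ∀ w ∈ Set.Ioo (0 : ℝ) 1,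
      (2 * (derivative G).eval w - arcsineDensity w) / (k * π ^ 2) ≤
        bernsteinVariance k p w * arcsineDensity w := by
    intro w hw
    rw [div_le_iff₀ (by positivity)]
    calc 2 * (derivative G).eval w - arcsineDensity w
        ≤ π ^ 2 * (w * (1 - w) * (derivative G).eval w ^ 2) * arcsineDensity w := by
          linear_combination two_mul_sub_arcsineDensity_le hw ((derivative G).eval w)
      _ ≤ _ := by
          grw [mul_one_sub_mul_sq_eval_derivative_bernsteinMean_le k p hw]
          · apply le_of_eq; ring
          · exact arcsineDensity_nonneg w
  calc 1 / (k * π ^ 2)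
      = ∫ w in (0 : ℝ)..1, (2 * (derivative G).eval w - arcsineDensity w) / (k * π ^ 2) := by
        rw [intervalIntegral.integral_div, intervalIntegral.integral_sub (hG'.const_mul 2)
          intervalIntegrable_arcsineDensity, intervalIntegral.integral_const_mul, hFTC,
          integral_arcsineDensity]
        norm_num
    _ ≤ _ := intervalIntegral.integral_mono_on_of_le_Ioo zero_le_one
        (((hG'.const_mul 2).sub intervalIntegrable_arcsineDensity).div_const _)
        (intervalIntegrable_arcsineDensity.continuousOn_mul hV.continuousOn) hpt

theorem arcsine_cauchy_schwarz_bound (k : ℕ) (hk : 1 ≤ k) (p : ℕ → ℝ)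
    (hp : ∀ z ≤ k, p z ∈ Set.Icc (0 : ℝ) 1) (h0 : p 0 = 0) (hk1 : p k = 1) :
    (∫ w in (0:ℝ)..1,
        (∑ z ∈ Finset.range (k + 1),
            alph k z w * (p z - ∑ z' ∈ Finset.range (k + 1), alph k z' w * p z') ^ 2)
          * (1 / (Real.pi * Real.sqrt (w * (1 - w)))))
      ≥ 1 / (k * Real.pi ^ 2) :=
  arcsine_cauchy_schwarz_bound_general k hk p h0 hk1
end

section
/- For k = 2 and the marking assumption (p_0 = 0, p_2 = 1), the value min_{p_1 ∈ [0,1]} max_{w ∈ [0,1]} Ĉ(w, (0, p_1, 1)) is attained at p_1 = 1/2, and max_w Ĉ(w, (0, 1/2, 1)) = Ĉ(1/2, (0,1/2,1)) = h_2(1/2·1/2 + 1/4) - 1/2·h_2(1/2) = h_2(1/2) - 1/2 = 1/2. Hence C_{2,2} = (1/2)·(1/2) = 1/4. -/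
/-- The payoff Ĉ(w,(0,p₁,1)) for k = 2:
α₀(w) = (1-w)², α₁(w) = 2w(1-w), α₂(w) = w². -/
noncomputable def Chat2 (w p1 : ℝ) : ℝ :=
  h2 (2 * w * (1 - w) * p1 + w ^ 2) - 2 * w * (1 - w) * h2 p1

/-!
For `p₁ = 1/2` the payoff is `h₂(w) - 2w(1-w)`, and `h₂(w) ≤ 1 - 2(w - 1/2)²` because the gap
`log 2 · (1 - 2(w - 1/2)²) - H(w)` (with `H` the entropy in nats) is convex with a critical point
at `w = 1/2`, where it vanishes; hence `max_w Ĉ(w, 1/2) = 1/2`, attained at `w = 1/2`.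
For arbitrary `p₁`, the choice `w = 1/2` gives `h₂(p₁/2 + 1/4) - h₂(p₁)/2`, which is at least `1/2`
by concavity of `h₂` at the midpoint of `p₁` and `1/2`.
-/

open Real Set

lemma h2_eq_binEntropy_div_log_two (p : ℝ) : h2 p = binEntropy p / log 2 := by
  simp only [h2, binEntropy, logb, log_inv]
  ring

lemma h2_half : h2 (1 / 2) = 1 := by
  rw [h2_eq_binEntropy_div_log_two, one_div, binEntropy_two_inv,
    div_self (log_pos one_lt_two).ne']

lemma concaveOn_h2 : ConcaveOn ℝ (Icc 0 1) h2 := by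
  have h2_eq : h2 = fun p => (log 2)⁻¹ • binEntropy p := by
    ext p
    rw [h2_eq_binEntropy_div_log_two, smul_eq_mul, div_eq_inv_mul]
  rw [h2_eq]
  exact strictConcave_binEntropy.concaveOn.smul (inv_nonneg.2 (log_pos one_lt_two).le)

lemma hasDerivAt_log_two_mul_sub_binEntropy {p : ℝ} (hp₀ : 0 < p) (hp₁ : p < 1) :
    HasDerivAt (fun p => log 2 * (1 - 2 * (p - 1 / 2) ^ 2) - binEntropy p)
      (log 2 * (-4 * (p - 1 / 2)) - (log (1 - p) - log p)) p := by
  have hq : HasDerivAt (fun p : ℝ => 1 - 2 * (p - 1 / 2) ^ 2) (-4 * (p - 1 / 2)) p :=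
    ((((hasDerivAt_id p).sub_const (1 / 2)).pow 2).const_mul 2).const_sub 1 |>.congr_deriv
      (by simp only [id]; ring)
  exact (hq.const_mul (log 2)).sub (hasDerivAt_binEntropy hp₀.ne' hp₁.ne)

/-- The second derivative `1 / p + 1 / (1 - p) - 4 log 2` is at least `4 - 4 log 2 > 0`. -/
lemma convexOn_log_two_mul_sub_binEntropy :
    ConvexOn ℝ (Icc 0 1) fun p => log 2 * (1 - 2 * (p - 1 / 2) ^ 2) - binEntropy p := by
  refine convexOn_of_hasDerivWithinAt2_nonneg (convex_Icc 0 1) (by fun_prop)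
    (f' := fun p => log 2 * (-4 * (p - 1 / 2)) - (log (1 - p) - log p))
    (f'' := fun p => 1 / p + 1 / (1 - p) - 4 * log 2) ?_ ?_ ?_
  all_goals rw [interior_Icc]
  · exact fun p ⟨hp₀, hp₁⟩ ↦ (hasDerivAt_log_two_mul_sub_binEntropy hp₀ hp₁).hasDerivWithinAt
  · rintro p ⟨hp₀, hp₁⟩
    have hp₁' : 1 - p ≠ 0 := (sub_pos.2 hp₁).ne'
    have hlin := (((hasDerivAt_id p).sub_const (1 / 2)).const_mul (-4)).const_mul (log 2)
    have hlog₁ := ((hasDerivAt_id p).const_sub 1).log hp₁'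
    have hlog := hasDerivAt_log hp₀.ne'
    exact (hlin.sub (hlog₁.sub hlog)).hasDerivWithinAt.congr_deriv
      (by simp only [id]; field_simp; ring)
  · rintro p ⟨hp₀, hp₁⟩
    have h4 : 4 ≤ 1 / p + 1 / (1 - p) := by
      rw [div_add_div _ _ hp₀.ne' (sub_pos.2 hp₁).ne', le_div_iff₀ (mul_pos hp₀ (sub_pos.2 hp₁))]
      nlinarith [sq_nonneg (p - 1 / 2)]
    have hlog2 : log 2 < 1 := log_two_lt_d9.trans (by norm_num)
    linarith

lemma binEntropy_le_log_two_mul_one_sub_two_mul_sq {p : ℝ} (hp : p ∈ Icc 0 1) :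
    binEntropy p ≤ log 2 * (1 - 2 * (p - 1 / 2) ^ 2) := by
  have hderiv := hasDerivAt_log_two_mul_sub_binEntropy (p := 1 / 2) (by norm_num) (by norm_num)
  have hmin := convexOn_log_two_mul_sub_binEntropy.isMinOn_of_rightDeriv_eq_zero
    (by rw [interior_Icc]; norm_num)
    (hderiv.hasDerivWithinAt.derivWithin (uniqueDiffWithinAt_Ioi _) |>.trans (by norm_num)) hp
  simp only [mem_ofPred_eq, one_div, binEntropy_two_inv] at hmin
  linarith

lemma h2_le_one_sub_two_mul_sq {p : ℝ} (hp : p ∈ Icc 0 1) : h2 p ≤ 1 - 2 * (p - 1 / 2) ^ 2 := by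
  rw [h2_eq_binEntropy_div_log_two, div_le_iff₀' (log_pos one_lt_two)]
  exact binEntropy_le_log_two_mul_one_sub_two_mul_sq hp

lemma Chat2_half_right_le {w : ℝ} (hw : w ∈ Icc 0 1) : Chat2 w (1 / 2) ≤ 1 / 2 := by
  have hle := h2_le_one_sub_two_mul_sq hw
  rw [Chat2, h2_half]
  ring_nf at hle ⊢
  linarith

lemma half_le_Chat2_half_left {p : ℝ} (hp : p ∈ Icc 0 1) : 1 / 2 ≤ Chat2 (1 / 2) p := by
  have hconc := concaveOn_h2.2 hp (by norm_num : (1 / 2 : ℝ) ∈ Icc 0 1)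
    (by norm_num : (0 : ℝ) ≤ 1 / 2) (by norm_num : (0 : ℝ) ≤ 1 / 2) (by norm_num)
  simp only [smul_eq_mul, h2_half] at hconc
  rw [Chat2]
  ring_nf at hconc ⊢
  linarith

theorem capacity_k2 :
    -- the inner max for p₁ = 1/2 equals 1/2 and is attained at w = 1/2
    (IsGreatest {v : ℝ | ∃ w ∈ Set.Icc (0 : ℝ) 1, v = Chat2 w (1/2)} (1/2) ∧
      Chat2 (1/2) (1/2) = 1/2) ∧
    -- p₁ = 1/2 is a minimizer: any other p₁ gives inner max at least 1/2
    (∀ p1 ∈ Set.Icc (0 : ℝ) 1, ∃ w ∈ Set.Icc (0 : ℝ) 1, 1/2 ≤ Chat2 w p1) ∧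
    -- hence C_{2,2} = (1/2) · (1/2) = 1/4
    (1 / 2 : ℝ) * (1 / 2) = 1 / 4 := by
  have hhalf_mem : (1 / 2 : ℝ) ∈ Icc 0 1 := by norm_num
  have hhalf : Chat2 (1 / 2) (1 / 2) = 1 / 2 :=
    le_antisymm (Chat2_half_right_le hhalf_mem) (half_le_Chat2_half_left hhalf_mem)
  refine ⟨⟨⟨⟨1 / 2, hhalf_mem, hhalf.symm⟩, ?_⟩, hhalf⟩, ?_, by norm_num⟩
  · rintro v ⟨w, hw, rfl⟩
    exact Chat2_half_right_le hw
  · exact fun p hp ↦ ⟨1 / 2, hhalf_mem, half_le_Chat2_half_left hp⟩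
end
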